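/- arXiv:2405.15885 — 4 statements merged into one kernel-verified Lean document; each statement's English description precedes it below -/
import Mathlib

section
/- Let 0 = t₀ < t₁ < ⋯ < t_N = T and let a_t, b_t, c_t be given by a_t = (α_t/α_T)(SNR_T/SNR_t), b_t = α_t(1 − SNR_T/SNR_t), c_t² = σ_t²(1 − SNR_T/SNR_t) with SNR_t = α_t²/σ_t². Define the non-Markovian inference kernels q^(ρ)(x_{t_n} | x₀, x_{t_{n+1}}, x_T) = N(a_{t_n} x_T + b_{t_n} x₀ + √(c²_{t_n} − ρ_n²)·(x_{t_{n+1}} − a_{t_{n+1}} x_T − b_{t_{n+1}} x₀)/c_{t_{n+1}}, ρ_n² I), with ρ_{N−1} = c_{t_{N−1}}. Then for every 1 ≤ n ≤ N−1, the marginal q^(ρ)(x_{t_n} | x₀, x_T) equals N(a_{t_n} x_T + b_{t_n} x₀, c²_{t_n} I). -/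
/-!
Each inference kernel is Gaussian with variance `ρ_n²` and mean affine in `x_{t_{n+1}}` with slope
`s = √(c_{t_n}² - ρ_n²) / c_{t_{n+1}}`, where `c_{t_{n+1}} > 0` because `SNR_T < SNR_{t_{n+1}}`.
Pushing `N(m_{n+1}, c_{t_{n+1}}² I)` through it gives
`N(m_n, (s² c_{t_{n+1}}² + ρ_n²) I) = N(m_n, c_{t_n}² I)`, coordinate by coordinate since the
coordinates are independent; backward induction from the top marginal gives all of them.
-/

open MeasureTheory ProbabilityTheory

noncomputable def chain {E : Type*} [MeasurableSpace E]
    (ν : Measure E) (K : ℕ → E → Measure E) : ℕ → Measure E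
  | 0 => ν
  | k + 1 => (chain ν K k).bind (K k)

open scoped NNReal

namespace MeasureTheory.Measure

section

variable {α β γ : Type*} [MeasurableSpace α] [MeasurableSpace β] [MeasurableSpace γ]

lemma bind_map {μ : Measure α} {f : α → β} {g : β → Measure γ} (hf : Measurable f)
    (hg : Measurable g) : (μ.map f).bind g = μ.bind (g ∘ f) := by
  rw [bind, bind, map_map hg hf]

end

section

variable {M : Type*} [AddMonoid M] [MeasurableSpace M] [MeasurableAdd₂ M]

lemma measurable_map_const_add (ν : Measure M) [SFinite ν] :
    Measurable fun x : M => ν.map (x + ·) := by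
  refine measurable_of_measurable_coe _ fun s hs => ?_
  simp_rw [map_apply (measurable_const_add _) hs]
  exact measurable_measure_prodMk_left (measurable_add hs)

lemma bind_map_const_add (μ ν : Measure M) [SFinite μ] [SFinite ν] :
    μ.bind (fun x => ν.map (x + ·)) = μ ∗ ν := by
  ext s hs
  rw [bind_apply hs (measurable_map_const_add ν).aemeasurable, conv, map_apply measurable_add hs,
    prod_apply (measurable_add hs)]
  simp_rw [map_apply (measurable_const_add _) hs]
  rfl

end

section

variable {ι : Type*} [Fintype ι] {X Y : ι → Type*} [∀ i, MeasurableSpace (X i)]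
  [∀ i, MeasurableSpace (Y i)] {κ : ∀ i, X i → Measure (Y i)}

lemma measurable_pi_kernel [∀ i x, IsProbabilityMeasure (κ i x)]
    (hκ : ∀ i, Measurable (κ i)) :
    Measurable fun x : ∀ i, X i => Measure.pi fun i => κ i (x i) := by
  refine .measure_of_isPiSystem_of_isProbabilityMeasure generateFrom_pi.symm isPiSystem_pi ?_
  rintro _ ⟨s, hs, rfl⟩
  simp_rw [pi_pi]
  exact Finset.measurable_prod _ fun i _ => (measurable_coe (hs i trivial)).comp
    ((hκ i).comp (measurable_pi_apply i))

lemma pi_bind_pi (μ : ∀ i, Measure (X i)) [∀ i, IsProbabilityMeasure (μ i)]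
    [∀ i x, IsProbabilityMeasure (κ i x)] (hκ : ∀ i, Measurable (κ i)) :
    (Measure.pi μ).bind (fun x => Measure.pi fun i => κ i (x i))
      = Measure.pi fun i => (μ i).bind (κ i) := by
  have : ∀ i, IsProbabilityMeasure ((μ i).bind (κ i)) := fun i =>
    isProbabilityMeasure_bind (hκ i).aemeasurable (ae_of_all _ inferInstance)
  refine (pi_eq fun s hs => ?_).symm
  have hcoord : ∀ i, Measurable fun y => κ i y (s i) := fun i =>
    (measurable_coe (hs i)).comp (hκ i)
  rw [bind_apply (.univ_pi hs) (measurable_pi_kernel hκ).aemeasurable]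
  simp_rw [pi_pi]
  rw [lintegral_prod_eq_prod_lintegral_of_indepFun _ _
    (iIndepFun_pi fun i => (hcoord i).aemeasurable)
    fun i => (hcoord i).comp (measurable_pi_apply i)]
  refine Finset.prod_congr rfl fun i _ => ?_
  rw [bind_apply (hs i) (hκ i).aemeasurable,
    ← (measurePreserving_eval μ i).lintegral_comp (hcoord i)]

end

end MeasureTheory.Measure

namespace ProbabilityTheory

lemma measurable_gaussianReal_left (v : ℝ≥0) : Measurable fun m : ℝ => gaussianReal m v :=
  measurable_gaussianReal.comp (measurable_id.prodMk measurable_const)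

lemma gaussianReal_bind_gaussianReal (m : ℝ) (v w : ℝ≥0) :
    (gaussianReal m v).bind (fun z => gaussianReal z w) = gaussianReal m (v + w) := by
  have hshift : (fun z => gaussianReal z w) = fun z => (gaussianReal 0 w).map (z + ·) := by
    ext1 z
    rw [gaussianReal_map_const_add, zero_add]
  rw [hshift, Measure.bind_map_const_add, gaussianReal_conv_gaussianReal, add_zero]

lemma gaussianReal_bind_gaussianReal_affine (m A s : ℝ) (v w : ℝ≥0) :
    (gaussianReal m v).bind (fun x => gaussianReal (A + s * x) w)
      = gaussianReal (A + s * m) ((s ^ 2).toNNReal * v + w) := by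
  have haffine : (fun x => A + s * x) = (A + ·) ∘ (s * ·) := rfl
  rw [← Function.comp_def (fun z => gaussianReal z w), haffine, ← Measure.bind_map
    ((measurable_const_add A).comp (measurable_const_mul s)) (measurable_gaussianReal_left w),
    ← Measure.map_map (measurable_const_add A) (measurable_const_mul s),
    gaussianReal_map_const_mul, gaussianReal_map_const_add, gaussianReal_bind_gaussianReal,
    add_comm, Real.toNNReal_of_nonneg (sq_nonneg s)]

lemma gaussianReal_bind_bridgeKernel (m m' : ℝ) {c c' ρ : ℝ} (hc' : c' ≠ 0) (hρ : 0 ≤ ρ)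
    (hρc : ρ ≤ c) :
    (gaussianReal m' (c' ^ 2).toNNReal).bind
        (fun x => gaussianReal (m + √(c ^ 2 - ρ ^ 2) * (x - m') / c') (ρ ^ 2).toNNReal)
      = gaussianReal m (c ^ 2).toNNReal := by
  set s := √(c ^ 2 - ρ ^ 2) / c'
  have hmean : ∀ x, m + √(c ^ 2 - ρ ^ 2) * (x - m') / c' = (m - s * m') + s * x :=
    fun x => by ring
  simp_rw [hmean]
  rw [gaussianReal_bind_gaussianReal_affine, sub_add_cancel]
  congr 1
  ext
  have hρsq : ρ ^ 2 ≤ c ^ 2 := pow_le_pow_left₀ hρ hρc 2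
  rw [NNReal.coe_add, NNReal.coe_mul, Real.coe_toNNReal _ (sq_nonneg _),
    Real.coe_toNNReal _ (sq_nonneg _), Real.coe_toNNReal _ (sq_nonneg _),
    Real.coe_toNNReal _ (sq_nonneg _), div_pow, Real.sq_sqrt (sub_nonneg.2 hρsq),
    div_mul_cancel₀ _ (pow_ne_zero 2 hc'), sub_add_cancel]

lemma pi_gaussianReal_bind_bridgeKernel {ι : Type*} [Fintype ι] (m m' : ι → ℝ) {c c' ρ : ℝ}
    (hc' : c' ≠ 0) (hρ : 0 ≤ ρ) (hρc : ρ ≤ c) :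
    (Measure.pi fun i => gaussianReal (m' i) (c' ^ 2).toNNReal).bind
        (fun x => Measure.pi fun i =>
          gaussianReal (m i + √(c ^ 2 - ρ ^ 2) * (x i - m' i) / c') (ρ ^ 2).toNNReal)
      = Measure.pi fun i => gaussianReal (m i) (c ^ 2).toNNReal := by
  rw [Measure.pi_bind_pi (κ := fun i x =>
      gaussianReal (m i + √(c ^ 2 - ρ ^ 2) * (x - m' i) / c') (ρ ^ 2).toNNReal) _
    fun i => (measurable_gaussianReal_left _).comp (by fun_prop)]
  simp_rw [gaussianReal_bind_bridgeKernel _ _ hc' hρ hρc]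

end ProbabilityTheory

lemma chain_eq_of_bind_eq {E : Type*} [MeasurableSpace E] {ν : Measure E}
    {K : ℕ → E → Measure E} (μ : ℕ → Measure E) {M : ℕ} (h₀ : ν = μ 0)
    (hstep : ∀ k < M, (μ k).bind (K k) = μ (k + 1)) : ∀ k ≤ M, chain ν K k = μ k
  | 0, _ => h₀
  | k + 1, hk => by
    rw [chain, chain_eq_of_bind_eq μ h₀ hstep k (by omega), hstep k hk]

lemma bridge_variance_pos {α σ S : ℝ} (hS : 0 ≤ S) (h : S < α ^ 2 / σ ^ 2) :
    0 < σ ^ 2 * (1 - S / (α ^ 2 / σ ^ 2)) := by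
  have hpos : 0 < α ^ 2 / σ ^ 2 := hS.trans_lt h
  have hσ : σ ≠ 0 := fun hσ => by simp [hσ] at hpos
  exact mul_pos (by positivity) (sub_pos.2 ((div_lt_one hpos).2 h))

theorem nonMarkovian_bridge_marginal_general
    (d N : ℕ) (t : ℕ → ℝ) (T : ℝ) (α σ : ℝ → ℝ)
    (SNR a b : ℝ → ℝ) (c : ℝ → ℝ)
    (hSNR : ∀ s, SNR s = α s ^ 2 / σ s ^ 2)
    (hc : ∀ s, 0 ≤ c s ∧ c s ^ 2 = σ s ^ 2 * (1 - SNR T / SNR s))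
    (hSNRord : ∀ n, 1 ≤ n → n < N → SNR T < SNR (t n))
    (ρ : ℕ → ℝ) (hρ : ∀ n, 0 ≤ ρ n ∧ ρ n ≤ c (t n))
    (x₀ xT : Fin d → ℝ)
    -- the inference kernel from `x_{t_{n+1}}` to `x_{t_n}` (given `x₀, x_T`)
    (K : ℕ → (Fin d → ℝ) → Measure (Fin d → ℝ))
    (hK : ∀ k, ∀ x : Fin d → ℝ,
      K k x = Measure.pi (fun i => gaussianReal
        (a (t (N - 2 - k)) * xT i + b (t (N - 2 - k)) * x₀ i +
          Real.sqrt (c (t (N - 2 - k)) ^ 2 - ρ (N - 2 - k) ^ 2) *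
            (x i - a (t (N - 1 - k)) * xT i - b (t (N - 1 - k)) * x₀ i) /
              c (t (N - 1 - k)))
        (Real.toNNReal (ρ (N - 2 - k) ^ 2))))
    -- the marginal at the top index `n = N - 1` (where `ρ_{N-1} = c_{t_{N-1}}`)
    (ν : Measure (Fin d → ℝ))
    (hν : ν = Measure.pi (fun i => gaussianReal
      (a (t (N - 1)) * xT i + b (t (N - 1)) * x₀ i)
      (Real.toNNReal (c (t (N - 1)) ^ 2)))) :
    ∀ n, 1 ≤ n → n ≤ N - 1 →
      chain ν K (N - 1 - n) = Measure.pi (fun i => gaussianReal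
        (a (t n) * xT i + b (t n) * x₀ i) (Real.toNNReal (c (t n) ^ 2))) := by
  have hc_ne : ∀ n, 1 ≤ n → n < N → c (t n) ≠ 0 := fun n h1 h2 hzero => by
    have hpos := bridge_variance_pos (hSNR T ▸ by positivity) (hSNR (t n) ▸ hSNRord n h1 h2)
    rw [← hSNR, ← (hc (t n)).2, hzero] at hpos
    simp at hpos
  set μ : ℕ → Measure (Fin d → ℝ) := fun k => Measure.pi fun i => gaussianReal
    (a (t (N - 1 - k)) * xT i + b (t (N - 1 - k)) * x₀ i) (c (t (N - 1 - k)) ^ 2).toNNReal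
  have hstep : ∀ k < N - 2, (μ k).bind (K k) = μ (k + 1) := fun k hk => by
    simp only [μ, funext (hK k), sub_sub, show N - 1 - (k + 1) = N - 2 - k by omega]
    exact pi_gaussianReal_bind_bridgeKernel _ _ (hc_ne _ (by omega) (by omega)) (hρ _).1 (hρ _).2
  intro n hn hnN
  have hchain := chain_eq_of_bind_eq μ hν hstep (N - 1 - n) (by omega)
  simpa only [μ, show N - 1 - (N - 1 - n) = n by omega] using hchain

/-- Marginal preservation for the non-Markovian diffusion bridges:
with bridge coefficients `a_t, b_t, c_t` and inference kernels
`q^(ρ)(x_{t_n} | x₀, x_{t_{n+1}}, x_T)` with `ρ_{N-1} = c_{t_{N-1}}`,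
the marginal at `t_n` is `N(a_{t_n} x_T + b_{t_n} x₀, c_{t_n}² I)`
for every `1 ≤ n ≤ N-1`. -/
theorem nonMarkovian_bridge_marginal
    (d N : ℕ) (hN : 2 ≤ N) (t : ℕ → ℝ) (T : ℝ) (htT : t N = T)
    (ht0 : t 0 = 0) (htmono : ∀ m n, m < n → n ≤ N → t m < t n)
    (α σ : ℝ → ℝ) (hα : ∀ s, 0 < α s) (hσpos : ∀ n, 1 ≤ n → n ≤ N → 0 < σ (t n))
    (SNR a b : ℝ → ℝ) (c : ℝ → ℝ)
    (hSNR : ∀ s, SNR s = α s ^ 2 / σ s ^ 2)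
    (ha : ∀ s, a s = (α s / α T) * (SNR T / SNR s))
    (hb : ∀ s, b s = α s * (1 - SNR T / SNR s))
    (hc : ∀ s, 0 ≤ c s ∧ c s ^ 2 = σ s ^ 2 * (1 - SNR T / SNR s))
    (hSNRord : ∀ n, 1 ≤ n → n < N → SNR T < SNR (t n))
    (ρ : ℕ → ℝ) (hρ : ∀ n, 0 ≤ ρ n ∧ ρ n ≤ c (t n)) (hρtop : ρ (N - 1) = c (t (N - 1)))
    (x₀ xT : Fin d → ℝ)
    -- the inference kernel from `x_{t_{n+1}}` to `x_{t_n}` (given `x₀, x_T`)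
    (K : ℕ → (Fin d → ℝ) → Measure (Fin d → ℝ))
    (hK : ∀ k, ∀ x : Fin d → ℝ,
      K k x = Measure.pi (fun i => gaussianReal
        (a (t (N - 2 - k)) * xT i + b (t (N - 2 - k)) * x₀ i +
          Real.sqrt (c (t (N - 2 - k)) ^ 2 - ρ (N - 2 - k) ^ 2) *
            (x i - a (t (N - 1 - k)) * xT i - b (t (N - 1 - k)) * x₀ i) /
              c (t (N - 1 - k)))
        (Real.toNNReal (ρ (N - 2 - k) ^ 2))))
    -- the marginal at the top index `n = N - 1` (where `ρ_{N-1} = c_{t_{N-1}}`)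
    (ν : Measure (Fin d → ℝ))
    (hν : ν = Measure.pi (fun i => gaussianReal
      (a (t (N - 1)) * xT i + b (t (N - 1)) * x₀ i)
      (Real.toNNReal (c (t (N - 1)) ^ 2)))) :
    ∀ n, 1 ≤ n → n ≤ N - 1 →
      chain ν K (N - 1 - n) = Measure.pi (fun i => gaussianReal
        (a (t n) * xT i + b (t n) * x₀ i) (Real.toNNReal (c (t n) ^ 2))) :=
  nonMarkovian_bridge_marginal_general d N t T α σ SNR a b c hSNR hc hSNRord ρ hρ x₀ xT K hK ν hν
end

section
/- Let c_t² = σ_t²(1 − SNR_T/SNR_t) with SNR_t = α_t²/σ_t², α_t = exp(∫₀ᵗ f), σ_t² = α_t² ∫₀ᵗ g²/α². Then on (0, T), c_t′/c_t = f(t) + g²(t)/σ_t² − g²(t)/(2 c_t²). -/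
/-!
Write `G t = ∫₀ᵗ g²/α²`, so that `σ_t² = α_t² G_t` and `SNR_t = 1/G_t`. Differentiating gives the
variance equation `(σ²)' = 2fσ² + g²`. Since `SNR_T/SNR_t = SNR_T σ_t²/α_t²`, the squared bridge
deviation is `c² = σ²(1 - SNR_T σ²/α²)`, and the variance equation turns into
`(c²)' = 2fc² - g² + 2g²c²/σ²`; dividing by `2c²` gives the logarithmic derivative of `c`.
The strict monotonicity of `G` gives `0 < G_t < G_T`, hence `c_t > 0`.
-/

open Real

lemma hasDerivAt_exp_integral {f : ℝ → ℝ} (hf : Continuous f) (a t : ℝ) :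
    HasDerivAt (fun s => exp (∫ τ in a..s, f τ)) (exp (∫ τ in a..t, f τ) * f t) t :=
  (hf.integral_hasStrictDerivAt a t).hasDerivAt.exp

lemma strictMono_integral_of_pos {h : ℝ → ℝ} (hh : Continuous h) (hpos : ∀ x, 0 < h x) (a : ℝ) :
    StrictMono fun s => ∫ τ in a..s, h τ :=
  strictMono_of_hasDerivAt_pos (fun x => (hh.integral_hasStrictDerivAt a x).hasDerivAt) hpos

lemma hasDerivAt_sq_mul_integral_div_sq {α g : ℝ → ℝ} {a t : ℝ} (hα : HasDerivAt α (α t * a) t)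
    (hα0 : α t ≠ 0) (hint : Continuous fun s => g s ^ 2 / α s ^ 2) (b : ℝ) :
    HasDerivAt (fun s => α s ^ 2 * ∫ τ in b..s, g τ ^ 2 / α τ ^ 2)
      (2 * a * (α t ^ 2 * ∫ τ in b..t, g τ ^ 2 / α τ ^ 2) + g t ^ 2) t := by
  refine ((hα.fun_pow 2).mul (hint.integral_hasStrictDerivAt b t).hasDerivAt).congr_deriv ?_
  field_simp
  ring

lemma mul_one_sub_snr_ratio_pos {α G σ2 SNR : ℝ → ℝ} {t T : ℝ} (hα : ∀ s, α s ≠ 0)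
    (hσ2 : ∀ s, σ2 s = α s ^ 2 * G s) (hSNR : ∀ s, SNR s = α s ^ 2 / σ2 s)
    (hGt : 0 < G t) (hGT : G t < G T) : 0 < σ2 t * (1 - SNR T / SNR t) := by
  have hSNR_G : ∀ s, SNR s = (G s)⁻¹ := fun s => by
    rw [hSNR, hσ2, div_mul_cancel_left₀ (pow_ne_zero 2 (hα s))]
  rw [hSNR_G, hSNR_G, inv_div_inv, hσ2]
  have : G t / G T < 1 := (div_lt_one (hGt.trans hGT)).2 hGT
  exact mul_pos (mul_pos (sq_pos_of_ne_zero (hα t)) hGt) (sub_pos.2 this)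

lemma hasDerivAt_mul_one_sub_mul_div_sq {α v w : ℝ → ℝ} {a b k t : ℝ}
    (hα : HasDerivAt α (α t * a) t) (hα0 : α t ≠ 0)
    (hv : HasDerivAt v (2 * a * v t + b) t) (hv0 : v t ≠ 0)
    (hw : ∀ s, w s = v s * (1 - k * v s / α s ^ 2)) :
    HasDerivAt w (2 * a * w t - b + 2 * b * w t / v t) t := by
  have hq := ((hv.const_mul k).fun_div (hα.fun_pow 2) (pow_ne_zero 2 hα0)).const_sub 1
  rw [funext hw]
  refine (hv.mul hq).congr_deriv ?_
  field_simp
  ring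

lemma exists_hasDerivAt_sqrt_div_sqrt {w : ℝ → ℝ} {w' t : ℝ} (hw : HasDerivAt w w' t)
    (hpos : 0 < w t) :
    ∃ c', HasDerivAt (fun s => √(w s)) c' t ∧ c' / √(w t) = w' / (2 * w t) := by
  refine ⟨_, hw.sqrt hpos.ne', ?_⟩
  rw [div_div, mul_assoc, mul_self_sqrt hpos.le]

lemma exists_hasDerivAt_sqrt_mul_one_sub_mul_div_sq {α v w : ℝ → ℝ} {a b k t : ℝ}
    (hα : HasDerivAt α (α t * a) t) (hα0 : α t ≠ 0)
    (hv : HasDerivAt v (2 * a * v t + b) t) (hv0 : v t ≠ 0)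
    (hw : ∀ s, w s = v s * (1 - k * v s / α s ^ 2)) (hpos : 0 < w t) :
    ∃ c', HasDerivAt (fun s => √(w s)) c' t ∧
      c' / √(w t) = a + b / v t - b / (2 * √(w t) ^ 2) := by
  obtain ⟨c', hc', hlog⟩ :=
    exists_hasDerivAt_sqrt_div_sqrt (hasDerivAt_mul_one_sub_mul_div_sq hα hα0 hv hv0 hw) hpos
  refine ⟨c', hc', ?_⟩
  rw [hlog, sq_sqrt hpos.le]
  field_simp
  ring

theorem bridge_c_log_derivative_general (f g : ℝ → ℝ)
    (hf : Continuous f) (hg : Continuous g) (hgpos : ∀ t, 0 < g t)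
    (T : ℝ)
    (α σ2 SNR c : ℝ → ℝ)
    (hα : ∀ t, α t = Real.exp (∫ τ in (0:ℝ)..t, f τ))
    (hσ2 : ∀ t, σ2 t = α t ^ 2 * ∫ τ in (0:ℝ)..t, g τ ^ 2 / α τ ^ 2)
    (hSNR : ∀ t, SNR t = α t ^ 2 / σ2 t)
    (hc : ∀ t, c t = Real.sqrt (σ2 t * (1 - SNR T / SNR t))) :
    ∀ t ∈ Set.Ioo 0 T, ∃ c' : ℝ, HasDerivAt c c' t ∧
      c' / c t = f t + g t ^ 2 / σ2 t - g t ^ 2 / (2 * c t ^ 2) := by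
  rintro t ⟨ht0, htT⟩
  have hαpos : ∀ s, 0 < α s := fun s => hα s ▸ exp_pos _
  have hα' : ∀ s, HasDerivAt α (α s * f s) s := by
    simpa only [← hα] using hasDerivAt_exp_integral hf 0
  have hint : Continuous fun s => g s ^ 2 / α s ^ 2 :=
    have hαc : Continuous α := continuous_iff_continuousAt.2 fun s => (hα' s).continuousAt
    (hg.pow 2).div (hαc.pow 2) fun s => (pow_pos (hαpos s) 2).ne'
  have hG : StrictMono fun s => ∫ τ in (0:ℝ)..s, g τ ^ 2 / α τ ^ 2 := strictMono_integral_of_pos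
    hint (fun s => div_pos (pow_pos (hgpos s) 2) (pow_pos (hαpos s) 2)) 0
  have hGt : 0 < ∫ τ in (0:ℝ)..t, g τ ^ 2 / α τ ^ 2 := by simpa using hG ht0
  have hσ2' : HasDerivAt σ2 (2 * f t * σ2 t + g t ^ 2) t := by
    simpa only [← hσ2] using hasDerivAt_sq_mul_integral_div_sq (hα' t) (hαpos t).ne' hint 0
  have hσ2pos : 0 < σ2 t := hσ2 t ▸ mul_pos (pow_pos (hαpos t) 2) hGt
  obtain ⟨c', hc', hlog⟩ := exists_hasDerivAt_sqrt_mul_one_sub_mul_div_sq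
    (w := fun s => σ2 s * (1 - SNR T / SNR s)) (k := SNR T) (hα' t) (hαpos t).ne' hσ2' hσ2pos.ne'
    (fun s => by rw [hSNR s, div_div_eq_mul_div])
    (mul_one_sub_snr_ratio_pos (fun s => (hαpos s).ne') hσ2 hSNR hGt (hG htT))
  rw [← funext hc] at hc'
  exact ⟨c', hc', by simpa only [← hc] using hlog⟩

/-- Logarithmic derivative of the bridge standard deviation:
with `c_t² = σ_t²(1 − SNR_T/SNR_t)`, on `(0, T)` one has
`c_t′/c_t = f(t) + g²(t)/σ_t² − g²(t)/(2 c_t²)`. -/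
theorem bridge_c_log_derivative (f g : ℝ → ℝ)
    (hf : Continuous f) (hg : Continuous g) (hgpos : ∀ t, 0 < g t)
    (T : ℝ) (hT : 0 < T)
    (α σ2 SNR c : ℝ → ℝ)
    (hα : ∀ t, α t = Real.exp (∫ τ in (0:ℝ)..t, f τ))
    (hσ2 : ∀ t, σ2 t = α t ^ 2 * ∫ τ in (0:ℝ)..t, g τ ^ 2 / α τ ^ 2)
    (hSNR : ∀ t, SNR t = α t ^ 2 / σ2 t)
    (hc : ∀ t, c t = Real.sqrt (σ2 t * (1 - SNR T / SNR t))) :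
    ∀ t ∈ Set.Ioo 0 T, ∃ c' : ℝ, HasDerivAt c c' t ∧
      c' / c t = f t + g t ^ 2 / σ2 t - g t ^ 2 / (2 * c t ^ 2) :=
  bridge_c_log_derivative_general f g hf hg hgpos T α σ2 SNR c hα hσ2 hSNR hc
end

section
/- Let b_t = α_t(1 − SNR_T/SNR_t) and c_t² = σ_t²(1 − SNR_T/SNR_t) with the noise schedule as above. Then b_t′/b_t = f(t) + g²(t)/σ_t² − g²(t)/c_t² for t ∈ (0, T). -/
/-- Logarithmic derivative of the bridge coefficient `b_t = α_t(1 − SNR_T/SNR_t)`: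
on `(0, T)`, with `c_t² = σ_t²(1 − SNR_T/SNR_t)`, one has
`b_t′/b_t = f(t) + g²(t)/σ_t² − g²(t)/c_t²`. -/
theorem bridge_b_log_derivative (f g : ℝ → ℝ)
    (hf : Continuous f) (hg : Continuous g) (hgpos : ∀ t, 0 < g t)
    (T : ℝ) (hT : 0 < T)
    (α σ2 SNR b c : ℝ → ℝ)
    (hα : ∀ t, α t = Real.exp (∫ τ in (0:ℝ)..t, f τ))
    (hσ2 : ∀ t, σ2 t = α t ^ 2 * ∫ τ in (0:ℝ)..t, g τ ^ 2 / α τ ^ 2)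
    (hSNR : ∀ t, SNR t = α t ^ 2 / σ2 t)
    (hb : ∀ t, b t = α t * (1 - SNR T / SNR t))
    (hc : ∀ t, c t = Real.sqrt (σ2 t * (1 - SNR T / SNR t))) :
    ∀ t ∈ Set.Ioo 0 T, ∃ b' : ℝ, HasDerivAt b b' t ∧
      b' / b t = f t + g t ^ 2 / σ2 t - g t ^ 2 / c t ^ 2 := by
  intro t ht
  obtain ⟨ht0, htT⟩ := ht
  have hαpos : ∀ u, 0 < α u := fun u => (hα u) ▸ Real.exp_pos _
  have hαfun : α = fun u => Real.exp (∫ τ in (0:ℝ)..u, f τ) := funext hα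
  have hαc : Continuous α := by
    rw [hαfun]
    exact Real.continuous_exp.comp
      (intervalIntegral.continuous_primitive (fun a b => hf.intervalIntegrable a b) 0)
  set h : ℝ → ℝ := fun τ => g τ ^ 2 / α τ ^ 2 with hh
  have hhc : Continuous h := (hg.pow 2).div (hαc.pow 2)
    (fun u => by have := hαpos u; positivity)
  have hhpos : ∀ u, 0 < h u := fun u => by
    have h1 := hgpos u; have h2 := hαpos u; positivity
  set I : ℝ → ℝ := fun u => ∫ τ in (0:ℝ)..u, h τ with hI
  have hIt : 0 < I t :=
    intervalIntegral.intervalIntegral_pos_of_pos (hhc.intervalIntegrable _ _) hhpos ht0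
  have hItT : I t < I T := by
    have hadd : I t + ∫ τ in t..T, h τ = I T :=
      intervalIntegral.integral_add_adjacent_intervals
        (hhc.intervalIntegrable _ _) (hhc.intervalIntegrable _ _)
    have hpos : 0 < ∫ τ in t..T, h τ :=
      intervalIntegral.intervalIntegral_pos_of_pos (hhc.intervalIntegrable _ _) hhpos htT
    linarith
  have hIT : 0 < I T := hIt.trans hItT
  have hSNR' : ∀ u, SNR T / SNR u = I u / I T := by
    intro u
    have key : ∀ v, SNR v = (I v)⁻¹ := by
      intro v
      rw [hSNR, hσ2]
      rw [div_mul_eq_div_div, div_self (pow_ne_zero 2 (hαpos v).ne'), one_div]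
    rw [key, key]
    rw [div_eq_mul_inv, inv_inv, mul_comm, ← div_eq_mul_inv]
  have hbfun : b = fun u => α u * (1 - I u / I T) := funext fun u => by
    rw [hb, hSNR' u]
  have hαd : HasDerivAt α (α t * f t) t := by
    rw [hαfun]
    exact ((hf.integral_hasStrictDerivAt 0 t).hasDerivAt).exp
  have hId : HasDerivAt I (h t) t := (hhc.integral_hasStrictDerivAt 0 t).hasDerivAt
  have hinner : HasDerivAt (fun u => 1 - I u / I T) (-(h t / I T)) t :=
    (hId.div_const (I T)).const_sub 1
  have hbd : HasDerivAt b (α t * f t * (1 - I t / I T) + α t * -(h t / I T)) t := by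
    rw [hbfun]
    exact hαd.mul hinner
  refine ⟨_, hbd, ?_⟩
  have h1 : (0:ℝ) < 1 - I t / I T := by
    rw [sub_pos, div_lt_one hIT]; exact hItT
  have hσ2t : σ2 t = α t ^ 2 * I t := hσ2 t
  have hct2 : c t ^ 2 = α t ^ 2 * I t * (1 - I t / I T) := by
    rw [hc, Real.sq_sqrt, hσ2t, hSNR']
    rw [hσ2t, hSNR']
    have := hαpos t
    positivity
  rw [hbfun, hct2, hσ2t]
  simp only [hh]
  have hαt := (hαpos t).ne'
  have hITt : I T - I t ≠ 0 := by linarith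
  have h1ne : (1 : ℝ) - I t / I T ≠ 0 := h1.ne'
  field_simp
  ring
end

section
/- Let a_t, b_t, c_t be the bridge coefficients with SNR_T/SNR_t → 0. Then a_t → 0, b_t/α_t → 1, and c_t/σ_t → 1; moreover the deterministic DBIM step x_s = (c_s/c_t) x_t + (a_s − (c_s/c_t) a_t) x_T + (b_s − (c_s/c_t) b_t) x̂ converges to the DDIM step x_s = (σ_s/σ_t) x_t + σ_s (α_s/σ_s − α_t/σ_t) x̂ in the limit SNR_T → 0 (with s, t and α, σ at s, t fixed). -/
/-!
As `SNR_T → 0⁺` the ratios `ρ = SNR_T / SNR_t` and `SNR_T / SNR_s` tend to `0`, and each bridge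
coefficient is a continuous function of its ratio: `a → 0`, `b → α`, `c → σ`. The DBIM step is
continuous in the coefficients as long as `c_t → σ_t ≠ 0`, so it converges to the step with
`a = 0`, `b = α`, `c = σ`, which is the DDIM step.
-/

open Filter Topology

section BridgeCoefficients

variable {ι : Type*} {l : Filter ι} {ρ : ι → ℝ}

theorem tendsto_bridge_coeff_a (hρ : Tendsto ρ l (𝓝 0)) (α αT : ℝ) :
    Tendsto (fun i => α / αT * ρ i) l (𝓝 0) := by
  simpa using hρ.const_mul (α / αT)

theorem tendsto_bridge_coeff_b (hρ : Tendsto ρ l (𝓝 0)) (α : ℝ) :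
    Tendsto (fun i => α * (1 - ρ i)) l (𝓝 α) := by
  simpa using ((tendsto_const_nhds (x := (1 : ℝ))).sub hρ).const_mul α

theorem tendsto_bridge_coeff_c (hρ : Tendsto ρ l (𝓝 0)) (σ : ℝ) :
    Tendsto (fun i => σ * Real.sqrt (1 - ρ i)) l (𝓝 σ) := by
  simpa using ((tendsto_const_nhds (x := (1 : ℝ))).sub hρ).sqrt.const_mul σ

end BridgeCoefficients

theorem tendsto_dbim_step {ι E : Type*} [AddCommGroup E] [Module ℝ E] [TopologicalSpace E]
    [IsTopologicalAddGroup E] [ContinuousSMul ℝ E] {l : Filter ι}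
    {aₛ aₜ bₛ bₜ cₛ cₜ : ι → ℝ} {αs αt σs σt : ℝ}
    (has : Tendsto aₛ l (𝓝 0)) (hat : Tendsto aₜ l (𝓝 0))
    (hbs : Tendsto bₛ l (𝓝 αs)) (hbt : Tendsto bₜ l (𝓝 αt))
    (hcs : Tendsto cₛ l (𝓝 σs)) (hct : Tendsto cₜ l (𝓝 σt)) (hσt : σt ≠ 0) (xt xT xhat : E) :
    Tendsto (fun i => (cₛ i / cₜ i) • xt + (aₛ i - cₛ i / cₜ i * aₜ i) • xT
        + (bₛ i - cₛ i / cₜ i * bₜ i) • xhat) l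
      (𝓝 ((σs / σt) • xt + (αs - σs / σt * αt) • xhat)) := by
  have hratio := hcs.div hct hσt
  have hstep := ((hratio.smul_const xt).add ((has.sub (hratio.mul hat)).smul_const xT)).add
    ((hbs.sub (hratio.mul hbt)).smul_const xhat)
  simpa using hstep

theorem dbim_to_ddim_limit_general (d : ℕ) (αt σt αs σs αT : ℝ)
    (hαt : 0 < αt) (hσt : 0 < σt) (hσs : 0 < σs)
    (St Ss : ℝ)
    (a b c : ℝ → ℝ → ℝ → ℝ)  -- (α, σ², ...) abbreviations specialized below
    (ha : ∀ α' S' ST, a α' S' ST = (α' / αT) * (ST / S'))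
    (hb : ∀ α' S' ST, b α' S' ST = α' * (1 - ST / S'))
    (hc : ∀ σ' S' ST, c σ' S' ST = σ' * Real.sqrt (1 - ST / S'))
    (xt xT xhat : Fin d → ℝ) :
    Tendsto (fun ST => a αt St ST) (nhdsWithin 0 (Set.Ioi 0)) (nhds 0) ∧
    Tendsto (fun ST => b αt St ST / αt) (nhdsWithin 0 (Set.Ioi 0)) (nhds 1) ∧
    Tendsto (fun ST => c σt St ST / σt) (nhdsWithin 0 (Set.Ioi 0)) (nhds 1) ∧
    Tendsto (fun ST =>
        (c σs Ss ST / c σt St ST) • xt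
        + (a αs Ss ST - (c σs Ss ST / c σt St ST) * a αt St ST) • xT
        + (b αs Ss ST - (c σs Ss ST / c σt St ST) * b αt St ST) • xhat)
      (nhdsWithin 0 (Set.Ioi 0))
      (nhds ((σs / σt) • xt + (σs * (αs / σs - αt / σt)) • xhat)) := by
  have hρ (S : ℝ) : Tendsto (fun ST : ℝ => ST / S) (𝓝[>] 0) (𝓝 0) := by
    simpa using ((tendsto_id (x := 𝓝 (0 : ℝ))).div_const S).mono_left
      (nhdsWithin_le_nhds (s := Set.Ioi 0))
  have hddim : αs - σs / σt * αt = σs * (αs / σs - αt / σt) := by field_simp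
  simp only [ha, hb, hc]
  refine ⟨tendsto_bridge_coeff_a (hρ St) αt αT, ?_, ?_, ?_⟩
  · simpa [hαt.ne'] using (tendsto_bridge_coeff_b (hρ St) αt).div_const αt
  · simpa [hσt.ne'] using (tendsto_bridge_coeff_c (hρ St) σt).div_const σt
  · rw [← hddim]
    exact tendsto_dbim_step (tendsto_bridge_coeff_a (hρ Ss) αs αT)
      (tendsto_bridge_coeff_a (hρ St) αt αT) (tendsto_bridge_coeff_b (hρ Ss) αs)
      (tendsto_bridge_coeff_b (hρ St) αt) (tendsto_bridge_coeff_c (hρ Ss) σs)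
      (tendsto_bridge_coeff_c (hρ St) σt) hσt.ne' xt xT xhat

/-- DBIM recovers DDIM in the limit `SNR_T → 0⁺`: `a_t → 0`, `b_t/α_t → 1`, `c_t/σ_t → 1`,
and the deterministic DBIM step converges to the DDIM step. -/
theorem dbim_to_ddim_limit (d : ℕ) (αt σt αs σs αT : ℝ)
    (hαt : 0 < αt) (hσt : 0 < σt) (hαs : 0 < αs) (hσs : 0 < σs) (hαT : 0 < αT)
    (St Ss : ℝ) (hSt : St = αt ^ 2 / σt ^ 2) (hSs : Ss = αs ^ 2 / σs ^ 2)
    (a b c : ℝ → ℝ → ℝ → ℝ)  -- (α, σ², ...) abbreviations specialized below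
    (ha : ∀ α' S' ST, a α' S' ST = (α' / αT) * (ST / S'))
    (hb : ∀ α' S' ST, b α' S' ST = α' * (1 - ST / S'))
    (hc : ∀ σ' S' ST, c σ' S' ST = σ' * Real.sqrt (1 - ST / S'))
    (xt xT xhat : Fin d → ℝ) :
    Tendsto (fun ST => a αt St ST) (nhdsWithin 0 (Set.Ioi 0)) (nhds 0) ∧
    Tendsto (fun ST => b αt St ST / αt) (nhdsWithin 0 (Set.Ioi 0)) (nhds 1) ∧
    Tendsto (fun ST => c σt St ST / σt) (nhdsWithin 0 (Set.Ioi 0)) (nhds 1) ∧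
    Tendsto (fun ST =>
        (c σs Ss ST / c σt St ST) • xt
        + (a αs Ss ST - (c σs Ss ST / c σt St ST) * a αt St ST) • xT
        + (b αs Ss ST - (c σs Ss ST / c σt St ST) * b αt St ST) • xhat)
      (nhdsWithin 0 (Set.Ioi 0))
      (nhds ((σs / σt) • xt + (σs * (αs / σs - αt / σt)) • xhat)) :=
  dbim_to_ddim_limit_general d αt σt αs σs αT hαt hσt hσs St Ss a b c ha hb hc xt xT xhat
end
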